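/- (Per-edge answer-size bound, eq. (42)) In any SPIR scheme on a graph G satisfying the system model: for every pair of servers (i, j) that share a message (i.e., {i, j} is an edge of G) and for every desired index k ∈ [K] (irrespective of whether message k is the one stored on that edge), H(A_i^{[k]} | 𝒬) + H(A_j^{[k]} | 𝒬) ≥ 2·L. -/

import Mathlib

open Finset

noncomputable section

namespace SPIR

variable {Ω : Type} [Fintype Ω]

/-- Probability of an event under the probability mass function `μ`
on the finite sample space `Ω`. -/
def pr (μ : Ω → ℝ) (E : Set Ω) : ℝ := ∑ ω, E.indicator μ ω

/-- Shannon entropy of the random variable `X`, measured in `q`-ary units. -/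
def ent (q : ℕ) (μ : Ω → ℝ) {α : Type*} (X : Ω → α) : ℝ :=
  -∑ ω, μ ω * Real.logb q (pr μ {ω' | X ω' = X ω})

/-- Conditional Shannon entropy `H(X | Y)` in `q`-ary units. -/
def condEnt (q : ℕ) (μ : Ω → ℝ) {α β : Type*} (X : Ω → α) (Y : Ω → β) : ℝ :=
  ent q μ (fun ω => (X ω, Y ω)) - ent q μ Y

/-- Mutual information `I(X ; Y)` in `q`-ary units. -/
def mutInf (q : ℕ) (μ : Ω → ℝ) {α β : Type*} (X : Ω → α) (Y : Ω → β) : ℝ :=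
  ent q μ X + ent q μ Y - ent q μ (fun ω => (X ω, Y ω))

/-- Two random variables have the same (joint) distribution. -/
def IdentDist (μ : Ω → ℝ) {α : Type*} (X Y : Ω → α) : Prop :=
  ∀ s : Set α, pr μ (X ⁻¹' s) = pr μ (Y ⁻¹' s)

/-- Independence of two random variables. -/
def IndepRV (μ : Ω → ℝ) {α β : Type*} (X : Ω → α) (Y : Ω → β) : Prop :=
  ∀ (s : Set α) (t : Set β),
    pr μ (X ⁻¹' s ∩ Y ⁻¹' t) = pr μ (X ⁻¹' s) * pr μ (Y ⁻¹' t)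

/-- A symmetric private information retrieval (SPIR) scheme on a graph-replicated
database, following the system model:  `N` servers are the vertices of a simple graph
whose `K` edges are messages; message `W k` (uniform on `F^L`) and the message-specific
common randomness `R k` are stored exactly at the two endpoints `e1 k`, `e2 k` of
edge `k`.  All Shannon quantities are in `q`-ary units, `q = |F|`. -/
structure Scheme (q N K L : ℕ) (F : Type) [Field F] [Fintype F]
    (Ω : Type) [Fintype Ω] where
  /-- the underlying probability mass function -/
  μ : Ω → ℝ
  μ_nonneg : ∀ ω, 0 ≤ μ ω
  μ_sum : ∑ ω, μ ω = 1
  card_F : Fintype.card F = q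
  /-- first endpoint of each edge (message) -/
  e1 : Fin K → Fin N
  /-- second endpoint of each edge (message) -/
  e2 : Fin K → Fin N
  edge_ne : ∀ k, e1 k ≠ e2 k
  /-- the graph is simple: distinct edges have distinct endpoint sets -/
  edge_inj : ∀ k k', ({e1 k, e2 k} : Set (Fin N)) = {e1 k', e2 k'} → k = k'
  /-- alphabet of the queries -/
  QT : Type
  /-- alphabet of the answers -/
  AT : Type
  /-- alphabet of the common randomness -/
  RT : Type
  /-- alphabet of the user's query randomness -/
  UT : Type
  /-- the messages -/
  W : Fin K → Ω → Fin L → F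
  /-- the message-specific common randomness -/
  R : Fin K → Ω → RT
  /-- the user's query randomness `𝒬` -/
  U : Ω → UT
  /-- `Q n k` : query sent to server `n` when the desired message index is `k` -/
  Q : Fin N → Fin K → Ω → QT
  /-- `A n k` : answer of server `n` when the desired message index is `k` -/
  A : Fin N → Fin K → Ω → AT
  /-- the messages are jointly independent, each uniform on `F^L` -/
  W_unif : ∀ w : Fin K → Fin L → F,
    pr μ {ω | (fun k => W k ω) = w} = (1 / (q : ℝ) ^ L) ^ K
  /-- the common randomness variables are jointly independent of each other and of the
  messages -/
  R_indep : ∀ (s : Fin K → Set RT) (t : Set (Fin K → Fin L → F)),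
    pr μ {ω | (fun k => W k ω) ∈ t ∧ ∀ k, R k ω ∈ s k}
      = pr μ {ω | (fun k => W k ω) ∈ t} * ∏ k, pr μ {ω | R k ω ∈ s k}
  /-- the common randomness variables are identically distributed -/
  R_ident : ∀ k k', IdentDist μ (R k) (R k')
  /-- the user's query randomness is independent of `(𝒲, ℛ)` -/
  U_indep : IndepRV μ U (fun ω => (fun k => W k ω, fun k => R k ω))
  /-- the queries are a deterministic function of `𝒬` -/
  query_det : ∀ k, condEnt q μ (fun ω (n : Fin N) => Q n k ω) U = 0
  /-- the answer of a server is a deterministic function of its query, its stored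
  messages `𝒲ₙ` and its stored randomness `ℛₙ` -/
  answer_det : ∀ n k, condEnt q μ (A n k)
    (fun ω => (Q n k ω,
      fun j : {j : Fin K // e1 j = n ∨ e2 j = n} => W j ω,
      fun j : {j : Fin K // e1 j = n ∨ e2 j = n} => R j ω)) = 0
  /-- user privacy: `(Qₙ^[k], Aₙ^[k], 𝒲ₙ, ℛₙ)` has the same distribution for all `k` -/
  user_privacy : ∀ (n : Fin N) (k k' : Fin K), IdentDist μ
    (fun ω => (Q n k ω, A n k ω,
      fun j : {j : Fin K // e1 j = n ∨ e2 j = n} => W j ω,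
      fun j : {j : Fin K // e1 j = n ∨ e2 j = n} => R j ω))
    (fun ω => (Q n k' ω, A n k' ω,
      fun j : {j : Fin K // e1 j = n ∨ e2 j = n} => W j ω,
      fun j : {j : Fin K // e1 j = n ∨ e2 j = n} => R j ω))
  /-- reliability: the desired message is recovered from all answers and `𝒬` -/
  reliability : ∀ k, condEnt q μ (W k)
    (fun ω => (fun n : Fin N => A n k ω, U ω)) = 0
  /-- database privacy -/
  db_privacy : ∀ (k : Fin K) (J : Set (Fin K)), k ∉ J →
    mutInf q μ (fun ω => fun j : J => W j ω)
      (fun ω => (fun n : Fin N => A n k ω,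
        fun n : Fin N => Q n k ω,
        fun ℓ : {ℓ : Fin K // ℓ ∉ J} => R ℓ ω,
        fun ℓ : {ℓ : Fin K // ℓ ∉ J ∧ ℓ ≠ k} => W ℓ ω,
        U ω)) = 0
  /-- randomness recoverability at each server storing `R j` -/
  rand_recov : ∀ (k j : Fin K) (n : Fin N), (e1 j = n ∨ e2 j = n) →
    condEnt q μ (R j)
      (fun ω => (A n k ω,
        fun m : {m : Fin K // e1 m = n ∨ e2 m = n} => W m ω,
        fun m : {m : Fin K // (e1 m = n ∨ e2 m = n) ∧ m ≠ j} => R m ω,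
        Q n k ω)) = 0

/-- The simple graph underlying an SPIR scheme. -/
def schemeGraph {q N K L : ℕ} {F : Type} [Field F] [Fintype F]
    {Ω : Type} [Fintype Ω] (S : Scheme q N K L F Ω) : SimpleGraph (Fin N) :=
  SimpleGraph.fromRel (fun i j => ∃ k, S.e1 k = i ∧ S.e2 k = j)


/-!
Fix the edge `m = {i, j}`. The randomness `R_m` is independent of `𝒬`, of all messages and of
all other randomness, yet randomness recoverability lets each endpoint `n` rebuild it from its
answer and its other stored data; hence `H(A_n^[k] | 𝒬) ≥ H(R_m)` for every `k`, and it
suffices to show `H(R_m) ≥ L`.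

Pick `k₀ ≠ m`. Database privacy (with reliability supplying `W_{k₀}`) says that `A_n^[k₀]`,
together with server `n`'s other data, carries no information about `W_m`; by user privacy the
same holds at index `m`. Since `(W_m, R_m)` is independent of everything off the edge `m`, this
upgrades to: `A_n^[m]` reveals nothing about `W_m` even given all off-edge data `D`. Shannon's
perfect-secrecy bound then gives `H(A_n^[m] | D) ≤ H(R_m)` for both endpoints. On the other
hand, at index `m` the two endpoint answers together with `D` determine every answer, hence
`W_m` (reliability) and `R_m` (recoverability), so
`L + H(R_m) = H(W_m, R_m | D) ≤ H(A_i^[m] | D) + H(A_j^[m] | D) ≤ 2 H(R_m)`.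
-/

variable {μ : Ω → ℝ} {q : ℕ}

section Probability

lemma pr_nonneg (hμ : ∀ ω, 0 ≤ μ ω) (E : Set Ω) : 0 ≤ pr μ E :=
  sum_nonneg fun ω _ => Set.indicator_nonneg (fun ω _ => hμ ω) ω

lemma pr_mono (hμ : ∀ ω, 0 ≤ μ ω) {E E' : Set Ω} (h : E ⊆ E') : pr μ E ≤ pr μ E' :=
  sum_le_sum fun ω _ => Set.indicator_le_indicator_of_subset h hμ ω

lemma pr_univ : pr μ Set.univ = ∑ ω, μ ω := by
  simp [pr]

lemma pr_lt_pr (hμ : ∀ ω, 0 ≤ μ ω) {E E' : Set Ω} (h : E ⊆ E') {ω : Ω}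
    (hω : ω ∈ E') (hωE : ω ∉ E) (hμω : μ ω ≠ 0) : pr μ E < pr μ E' :=
  sum_lt_sum (fun ω _ => Set.indicator_le_indicator_of_subset h hμ ω)
    ⟨ω, mem_univ ω, by simpa [hω, hωE] using (hμ ω).lt_of_ne' hμω⟩

lemma pr_pos (hμ : ∀ ω, 0 ≤ μ ω) {E : Set Ω} {ω : Ω} (hω : ω ∈ E)
    (hμω : μ ω ≠ 0) : 0 < pr μ E := by
  simpa [pr] using pr_lt_pr hμ (Set.empty_subset E) hω (Set.notMem_empty ω) hμω

lemma pr_congr {E E' : Set Ω} (h : ∀ ω, μ ω ≠ 0 → (ω ∈ E ↔ ω ∈ E')) :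
    pr μ E = pr μ E' := by
  classical
  unfold pr
  refine sum_congr rfl fun ω _ => ?_
  by_cases hω : μ ω = 0
  · simp [Set.indicator_apply, hω]
  · simp only [Set.indicator_apply, h ω hω]

lemma pr_eq_sum_pr_inter {β : Type*} [DecidableEq β] (E : Set Ω) (Y : Ω → β) (s : Finset β)
    (hs : ∀ ω ∈ E, Y ω ∈ s) : pr μ E = ∑ b ∈ s, pr μ (E ∩ Y ⁻¹' {b}) := by
  classical
  simp only [pr, Set.indicator_apply]
  rw [sum_comm]
  refine sum_congr rfl fun ω _ => ?_
  by_cases hω : ω ∈ E <;> simp [hω, hs]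

lemma sum_mul_eq_sum_mul_pr (h : Ω → ℝ) (s : Finset ℝ) (hs : ∀ ω, h ω ∈ s) :
    ∑ ω, μ ω * h ω = ∑ r ∈ s, r * pr μ (h ⁻¹' {r}) := by
  classical
  simp only [pr, Set.indicator_apply, mul_sum]
  rw [sum_comm]
  refine sum_congr rfl fun ω _ => ?_
  simp [hs, mul_comm]

lemma IdentDist.sum_mul_comp {α : Type*} {X Y : Ω → α} (hXY : IdentDist μ X Y)
    (G : α → ℝ) : ∑ ω, μ ω * G (X ω) = ∑ ω, μ ω * G (Y ω) := by
  classical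
  set s := univ.image (fun ω => G (X ω)) ∪ univ.image (fun ω => G (Y ω))
  rw [sum_mul_eq_sum_mul_pr (fun ω => G (X ω)) s (by simp [s]),
    sum_mul_eq_sum_mul_pr (fun ω => G (Y ω)) s (by simp [s])]
  exact sum_congr rfl fun r _ => congrArg (r * ·) (hXY (G ⁻¹' {r}))

def atomPr (μ : Ω → ℝ) {α : Type*} (X : Ω → α) (ω : Ω) : ℝ :=
  pr μ {ω' | X ω' = X ω}

lemma atomPr_pos (hμ : ∀ ω, 0 ≤ μ ω) {α : Type*} (X : Ω → α) {ω : Ω}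
    (hμω : μ ω ≠ 0) : 0 < atomPr μ X ω :=
  pr_pos hμ rfl hμω

lemma atomPr_pair_le (hμ : ∀ ω, 0 ≤ μ ω) {α β : Type*} (X : Ω → α) (Y : Ω → β)
    (ω : Ω) : atomPr μ (fun ω => (X ω, Y ω)) ω ≤ atomPr μ Y ω :=
  pr_mono hμ fun _ h => congrArg Prod.snd h

end Probability

section Determines

variable {Ω : Type*} {μ : Ω → ℝ} {α β γ : Type*}
  {X : Ω → α} {Y : Ω → β} {Z : Ω → γ}

def Determines (μ : Ω → ℝ) (Y : Ω → β) (X : Ω → α) : Prop :=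
  ∀ ω ω', μ ω ≠ 0 → μ ω' ≠ 0 → Y ω = Y ω' → X ω = X ω'

lemma Determines.of_forall (h : ∀ ω ω', Y ω = Y ω' → X ω = X ω') : Determines μ Y X :=
  fun ω ω' _ _ => h ω ω'

lemma Determines.trans (h₁ : Determines μ Z Y) (h₂ : Determines μ Y X) : Determines μ Z X :=
  fun ω ω' hω hω' h => h₂ ω ω' hω hω' (h₁ ω ω' hω hω' h)

lemma Determines.prodMk (h₁ : Determines μ Z X) (h₂ : Determines μ Z Y) :
    Determines μ Z (fun ω => (X ω, Y ω)) :=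
  fun ω ω' hω hω' h => Prod.ext (h₁ ω ω' hω hω' h) (h₂ ω ω' hω hω' h)

end Determines

section Entropy

variable {α β γ : Type*} {X : Ω → α} {Y : Ω → β} {Z : Ω → γ}

lemma ent_eq_neg_sum_atomPr (X : Ω → α) :
    ent q μ X = -∑ ω, μ ω * Real.logb q (atomPr μ X ω) :=
  rfl

lemma ent_congr (h : ∀ ω' ω, X ω' = X ω ↔ Y ω' = Y ω) : ent q μ X = ent q μ Y := by
  simp only [ent, h]

lemma IdentDist.ent_comp {X Y : Ω → α} (hXY : IdentDist μ X Y) (f : α → β) :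
    ent q μ (fun ω => f (X ω)) = ent q μ (fun ω => f (Y ω)) := by
  have h : ∀ Z : Ω → α, ent q μ (fun ω => f (Z ω))
      = -∑ ω, μ ω * Real.logb q (pr μ (Z ⁻¹' (f ⁻¹' {f (Z ω)}))) := fun _ => rfl
  rw [h, h, hXY.sum_mul_comp fun a => Real.logb q (pr μ (X ⁻¹' (f ⁻¹' {f a})))]
  simp only [show ∀ s, pr μ (X ⁻¹' s) = pr μ (Y ⁻¹' s) from hXY]

lemma ent_const (hμ1 : ∑ ω, μ ω = 1) (c : α) : ent q μ (fun _ => c) = 0 := by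
  simp [ent, pr_univ, hμ1]

lemma ent_pair_eq_of_determines (h : Determines μ Y X) :
    ent q μ (fun ω => (X ω, Y ω)) = ent q μ Y := by
  unfold ent
  congr 1
  refine sum_congr rfl fun ω _ => ?_
  by_cases hω : μ ω = 0
  · simp [hω]
  · congr 2
    exact pr_congr fun ω' hω' => ⟨fun h' => congrArg Prod.snd h',
      fun h' => Prod.ext (h ω' ω hω' hω h') h'⟩

lemma condEnt_eq_zero_of_determines (h : Determines μ Y X) : condEnt q μ X Y = 0 :=
  sub_eq_zero.2 (ent_pair_eq_of_determines h)

lemma condEnt_eq_sum (X : Ω → α) (Y : Ω → β) : condEnt q μ X Y = ∑ ω, μ ω *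
    (Real.logb q (atomPr μ Y ω) - Real.logb q (atomPr μ (fun ω => (X ω, Y ω)) ω)) := by
  simp only [condEnt, ent_eq_neg_sum_atomPr, mul_sub, sum_sub_distrib]
  ring

lemma condEnt_summand_nonneg (hq : 1 < q) (hμ : ∀ ω, 0 ≤ μ ω) (X : Ω → α)
    (Y : Ω → β) (ω : Ω) : 0 ≤ μ ω *
      (Real.logb q (atomPr μ Y ω) - Real.logb q (atomPr μ (fun ω => (X ω, Y ω)) ω)) := by
  by_cases hω : μ ω = 0
  · simp [hω]
  · exact mul_nonneg (hμ ω) <| sub_nonneg.2 <| Real.logb_le_logb_of_le (by exact_mod_cast hq)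
      (atomPr_pos hμ _ hω) (atomPr_pair_le hμ X Y ω)

lemma condEnt_nonneg (hq : 1 < q) (hμ : ∀ ω, 0 ≤ μ ω) (X : Ω → α) (Y : Ω → β) :
    0 ≤ condEnt q μ X Y := by
  rw [condEnt_eq_sum]
  exact sum_nonneg fun ω _ => condEnt_summand_nonneg hq hμ X Y ω

lemma determines_of_condEnt_eq_zero (hq : 1 < q) (hμ : ∀ ω, 0 ≤ μ ω)
    (h : condEnt q μ X Y = 0) : Determines μ Y X := by
  intro ω ω' hω hω' hY
  by_contra hX
  refine h.not_gt ?_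
  rw [condEnt_eq_sum]
  refine sum_pos' (fun ω _ => condEnt_summand_nonneg hq hμ X Y ω) ⟨ω, mem_univ ω, ?_⟩
  have hlt : atomPr μ (fun ω => (X ω, Y ω)) ω < atomPr μ Y ω :=
    pr_lt_pr hμ (fun _ h => congrArg Prod.snd h) hY.symm
      (fun h => hX (congrArg Prod.fst h).symm) hω'
  exact mul_pos ((hμ ω).lt_of_ne' hω) <| sub_pos.2 <|
    Real.logb_lt_logb (by exact_mod_cast hq) (atomPr_pos hμ _ hω) hlt

end Entropy

section Submodularity

variable {α β γ : Type*}

lemma sum_indicator_div_atomPr_le_one (V : Ω → α) (v : α) :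
    ∑ ω, {ω | V ω = v}.indicator (fun ω => μ ω / atomPr μ V ω) ω ≤ 1 := by
  classical
  have h : ∀ ω, {ω | V ω = v}.indicator (fun ω => μ ω / atomPr μ V ω) ω
      = {ω | V ω = v}.indicator μ ω / pr μ {ω | V ω = v} := by
    intro ω
    by_cases hω : V ω = v <;> simp [hω, atomPr]
  rw [sum_congr rfl fun ω _ => h ω, ← sum_div]
  exact div_self_le_one _

lemma sum_indicator_div_atomPr_le_indicator (hμ : ∀ ω, 0 ≤ μ ω) (X : Ω → α)
    (Y : Ω → β) (Z : Ω → γ) (ω₁ ω₂ : Ω) :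
    ∑ ω, {ω | (X ω, Z ω) = (X ω₁, Z ω₁) ∧ (Y ω, Z ω) = (Y ω₂, Z ω₂)}.indicator
      (fun ω => μ ω / atomPr μ (fun ω => (X ω, Y ω, Z ω)) ω) ω
      ≤ {ω₂ | Z ω₂ = Z ω₁}.indicator 1 ω₂ := by
  by_cases hZ : Z ω₂ = Z ω₁
  · refine le_trans (sum_le_sum fun ω _ => Set.indicator_le_indicator_of_subset ?_
      (fun ω => div_nonneg (hμ ω) (pr_nonneg hμ _)) ω)
      ((sum_indicator_div_atomPr_le_one _ (X ω₁, Y ω₂, Z ω₁)).trans_eq ?_)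
    · intro ω ⟨h₁, h₂⟩
      simp only [Prod.mk.injEq] at h₁ h₂
      simp [h₁.1, h₂.1, h₁.2]
    · simp [hZ]
  · refine (sum_eq_zero fun ω _ => Set.indicator_of_notMem ?_ _).trans_le
      (Set.indicator_nonneg (fun _ _ => zero_le_one) _)
    intro ⟨h₁, h₂⟩
    simp only [Prod.mk.injEq] at h₁ h₂
    exact hZ (h₂.2.symm.trans h₁.2)

/-- With `(x, z) = (X ω₁, Z ω₁)`, the left side is the sum of `P(y, z)` over the values `y`
occurring together with `(x, z)`, hence at most `P(z)`. -/
lemma sum_indicator_mul_atomPr_div_le (hμ : ∀ ω, 0 ≤ μ ω) (X : Ω → α) (Y : Ω → β)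
    (Z : Ω → γ) (ω₁ : Ω) :
    ∑ ω, {ω | (X ω, Z ω) = (X ω₁, Z ω₁)}.indicator (fun ω => μ ω
      * atomPr μ (fun ω => (Y ω, Z ω)) ω / atomPr μ (fun ω => (X ω, Y ω, Z ω)) ω) ω
      ≤ atomPr μ Z ω₁ := by
  classical
  set T : Ω → α × β × γ := fun ω => (X ω, Y ω, Z ω)
  set E : Ω → Set Ω := fun ω₂ =>
    {ω | (X ω, Z ω) = (X ω₁, Z ω₁) ∧ (Y ω, Z ω) = (Y ω₂, Z ω₂)}
  have hsplit : ∀ ω, {ω | (X ω, Z ω) = (X ω₁, Z ω₁)}.indicator (fun ω => μ ω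
      * atomPr μ (fun ω => (Y ω, Z ω)) ω / atomPr μ T ω) ω
      = ∑ ω₂, μ ω₂ * (E ω₂).indicator (fun ω => μ ω / atomPr μ T ω) ω := by
    intro ω
    have hYZ : atomPr μ (fun ω => (Y ω, Z ω)) ω
        = ∑ ω₂, if (Y ω, Z ω) = (Y ω₂, Z ω₂) then μ ω₂ else 0 := by
      simp [atomPr, pr, Set.indicator_apply, eq_comm]
    by_cases h : (X ω, Z ω) = (X ω₁, Z ω₁)
    · simp only [Set.indicator_apply, Set.mem_ofPred_eq, E, h, true_and, hYZ, mul_sum,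
        sum_div]
      refine sum_congr rfl fun ω₂ _ => ?_
      split_ifs <;> ring
    · rw [Set.indicator_of_notMem (s := {ω | (X ω, Z ω) = (X ω₁, Z ω₁)}) h]
      exact (sum_eq_zero fun ω₂ _ => by
        rw [Set.indicator_of_notMem (s := E ω₂) fun h' => h h'.1, mul_zero]).symm
  calc _ = ∑ ω₂, μ ω₂ *
        ∑ ω, (E ω₂).indicator (fun ω => μ ω / atomPr μ T ω) ω := by
        rw [sum_congr rfl fun ω _ => hsplit ω, sum_comm]
        simp only [mul_sum]
    _ ≤ ∑ ω₂, μ ω₂ * {ω₂ | Z ω₂ = Z ω₁}.indicator 1 ω₂ :=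
        sum_le_sum fun ω₂ _ => mul_le_mul_of_nonneg_left
          (sum_indicator_div_atomPr_le_indicator hμ X Y Z ω₁ ω₂) (hμ ω₂)
    _ = atomPr μ Z ω₁ := by
        simp [atomPr, pr, Set.indicator_apply]

/-- The left side is the sum of `P(x, z) · P(y, z) / P(z)` over the values `(x, y, z)` taken by
`(X, Y, Z)`, hence at most `∑_z P(z)`. -/
lemma sum_mul_submodularRatio_le (hμ : ∀ ω, 0 ≤ μ ω) (X : Ω → α) (Y : Ω → β)
    (Z : Ω → γ) : ∑ ω, μ ω * (atomPr μ (fun ω => (X ω, Z ω)) ω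
      * atomPr μ (fun ω => (Y ω, Z ω)) ω
      / (atomPr μ (fun ω => (X ω, Y ω, Z ω)) ω * atomPr μ Z ω)) ≤ ∑ ω, μ ω := by
  classical
  set f : Ω → ℝ := fun ω => μ ω * atomPr μ (fun ω => (Y ω, Z ω)) ω
    / atomPr μ (fun ω => (X ω, Y ω, Z ω)) ω
  have hsplit : ∀ ω, μ ω * (atomPr μ (fun ω => (X ω, Z ω)) ω
      * atomPr μ (fun ω => (Y ω, Z ω)) ω / (atomPr μ (fun ω => (X ω, Y ω, Z ω)) ω
        * atomPr μ Z ω))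
      = ∑ ω₁, μ ω₁ * {ω | (X ω, Z ω) = (X ω₁, Z ω₁)}.indicator f ω
          / atomPr μ Z ω₁ := by
    intro ω
    have hXZ : atomPr μ (fun ω => (X ω, Z ω)) ω
        = ∑ ω₁, if (X ω, Z ω) = (X ω₁, Z ω₁) then μ ω₁ else 0 := by
      simp [atomPr, pr, Set.indicator_apply, eq_comm]
    rw [hXZ, sum_mul, sum_div, mul_sum]
    refine sum_congr rfl fun ω₁ _ => ?_
    by_cases h : (X ω, Z ω) = (X ω₁, Z ω₁)
    · have hZ : atomPr μ Z ω = atomPr μ Z ω₁ := by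
        rw [atomPr, atomPr, (Prod.mk.inj h).2]
      rw [if_pos h, Set.indicator_of_mem (s := {ω | (X ω, Z ω) = (X ω₁, Z ω₁)}) h, hZ]
      ring
    · rw [if_neg h, Set.indicator_of_notMem (s := {ω | (X ω, Z ω) = (X ω₁, Z ω₁)}) h]
      simp
  calc _ = ∑ ω₁, μ ω₁ * (∑ ω, {ω | (X ω, Z ω) = (X ω₁, Z ω₁)}.indicator f ω)
        / atomPr μ Z ω₁ := by
        rw [sum_congr rfl fun ω _ => hsplit ω, sum_comm]
        simp only [mul_sum, sum_div]
    _ ≤ ∑ ω₁, μ ω₁ * atomPr μ Z ω₁ / atomPr μ Z ω₁ := by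
        gcongr with ω₁
        · exact pr_nonneg hμ _
        · exact hμ ω₁
        · exact sum_indicator_mul_atomPr_div_le hμ X Y Z ω₁
    _ ≤ ∑ ω, μ ω := by
        gcongr with ω₁
        rw [mul_div_assoc]
        exact mul_le_of_le_one_right (hμ ω₁) (div_self_le_one _)

lemma mul_logb_add_sub_le {m a b c d : ℝ} (hq : 1 < q) (hm : 0 ≤ m) (ha : 0 < a)
    (hb : 0 < b) (hc : 0 < c) (hd : 0 < d) :
    m * (Real.logb q a + Real.logb q b - Real.logb q c - Real.logb q d)
      ≤ (m * (a * b / (c * d)) - m) / Real.log q := by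
  have hlog : Real.logb q a + Real.logb q b - Real.logb q c - Real.logb q d
      = Real.log (a * b / (c * d)) / Real.log q := by
    rw [← Real.logb, Real.logb_div (by positivity) (by positivity), Real.logb_mul ha.ne' hb.ne',
      Real.logb_mul hc.ne' hd.ne']
    ring
  rw [hlog, ← mul_sub_one, mul_div_assoc m]
  exact mul_le_mul_of_nonneg_left (div_le_div_of_nonneg_right
    (Real.log_le_sub_one_of_pos (by positivity)) (Real.log_pos (by exact_mod_cast hq)).le) hm

lemma ent_submodular (hq : 1 < q) (hμ : ∀ ω, 0 ≤ μ ω) (X : Ω → α) (Y : Ω → β)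
    (Z : Ω → γ) : ent q μ (fun ω => (X ω, Y ω, Z ω)) + ent q μ Z
      ≤ ent q μ (fun ω => (X ω, Z ω)) + ent q μ (fun ω => (Y ω, Z ω)) := by
  set pXZ := atomPr μ (fun ω => (X ω, Z ω))
  set pYZ := atomPr μ (fun ω => (Y ω, Z ω))
  set pT := atomPr μ (fun ω => (X ω, Y ω, Z ω))
  set pZ := atomPr μ Z
  have hsum : ∑ ω, μ ω * (Real.logb q (pXZ ω) + Real.logb q (pYZ ω) - Real.logb q (pT ω)
      - Real.logb q (pZ ω)) ≤ 0 :=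
    calc _ ≤ ∑ ω, (μ ω * (pXZ ω * pYZ ω / (pT ω * pZ ω)) - μ ω) / Real.log q := by
          refine sum_le_sum fun ω _ => ?_
          by_cases hω : μ ω = 0
          · simp [hω]
          exact mul_logb_add_sub_le hq (hμ ω) (atomPr_pos hμ _ hω) (atomPr_pos hμ _ hω)
            (atomPr_pos hμ _ hω) (atomPr_pos hμ _ hω)
      _ = (∑ ω, μ ω * (pXZ ω * pYZ ω / (pT ω * pZ ω)) - ∑ ω, μ ω) / Real.log q := by
          rw [← sum_div, sum_sub_distrib]
      _ ≤ 0 := div_nonpos_of_nonpos_of_nonneg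
          (sub_nonpos.2 (sum_mul_submodularRatio_le hμ X Y Z))
          (Real.log_pos (by exact_mod_cast hq)).le
  simp only [mul_add, mul_sub, sum_add_distrib, sum_sub_distrib] at hsum
  simp only [ent_eq_neg_sum_atomPr]
  linarith

end Submodularity

section ConditionalEntropy

variable {α β γ : Type*} {X : Ω → α} {Y : Ω → β} {Z : Ω → γ}

lemma condEnt_chain_rule (X : Ω → α) (Y : Ω → β) (Z : Ω → γ) :
    condEnt q μ (fun ω => (X ω, Y ω)) Z
      = condEnt q μ X Z + condEnt q μ Y (fun ω => (X ω, Z ω)) := by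
  have h : ent q μ (fun ω => ((X ω, Y ω), Z ω)) = ent q μ (fun ω => (Y ω, X ω, Z ω)) :=
    ent_congr fun _ _ => by simp only [Prod.mk.injEq]; tauto
  simp only [condEnt, h]
  ring

lemma condEnt_sub_condEnt_comm (X : Ω → α) (Y : Ω → β) (Z : Ω → γ) :
    condEnt q μ X Z - condEnt q μ X (fun ω => (Y ω, Z ω))
      = condEnt q μ Y Z - condEnt q μ Y (fun ω => (X ω, Z ω)) := by
  have h : ent q μ (fun ω => (X ω, Y ω, Z ω)) = ent q μ (fun ω => (Y ω, X ω, Z ω)) :=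
    ent_congr fun _ _ => by simp only [Prod.mk.injEq]; tauto
  simp only [condEnt, h]
  ring

lemma condEnt_pair_right_le (hq : 1 < q) (hμ : ∀ ω, 0 ≤ μ ω) (X : Ω → α) (Y : Ω → β)
    (Z : Ω → γ) : condEnt q μ X (fun ω => (Y ω, Z ω)) ≤ condEnt q μ X Z := by
  have := ent_submodular hq hμ X Y Z
  simp only [condEnt]
  linarith

lemma condEnt_pair_right_eq_of_determines (h : Determines μ Y Z) :
    condEnt q μ X (fun ω => (Y ω, Z ω)) = condEnt q μ X Y := by
  have hXY : Determines μ (fun ω => (X ω, Y ω)) Z := fun ω ω' hω hω' hxy =>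
    h ω ω' hω hω' (congrArg Prod.snd hxy)
  have e₁ : ent q μ (fun ω => (X ω, Y ω, Z ω)) = ent q μ (fun ω => (Z ω, X ω, Y ω)) :=
    ent_congr fun _ _ => by simp only [Prod.mk.injEq]; tauto
  have e₂ : ent q μ (fun ω => (Y ω, Z ω)) = ent q μ (fun ω => (Z ω, Y ω)) :=
    ent_congr fun _ _ => by simp only [Prod.mk.injEq]; tauto
  simp only [condEnt, e₁, e₂, ent_pair_eq_of_determines hXY, ent_pair_eq_of_determines h]

lemma condEnt_anti (hq : 1 < q) (hμ : ∀ ω, 0 ≤ μ ω) (h : Determines μ Y Z) :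
    condEnt q μ X Y ≤ condEnt q μ X Z :=
  condEnt_pair_right_eq_of_determines h ▸ condEnt_pair_right_le hq hμ X Y Z

lemma condEnt_congr_right (hq : 1 < q) (hμ : ∀ ω, 0 ≤ μ ω) (hYZ : Determines μ Y Z)
    (hZY : Determines μ Z Y) : condEnt q μ X Y = condEnt q μ X Z :=
  (condEnt_anti hq hμ hYZ).antisymm (condEnt_anti hq hμ hZY)

lemma condEnt_le_ent (hq : 1 < q) (hμ : ∀ ω, 0 ≤ μ ω) (hμ1 : ∑ ω, μ ω = 1)
    (X : Ω → α) (Y : Ω → β) : condEnt q μ X Y ≤ ent q μ X := by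
  have h := condEnt_pair_right_le hq hμ X Y (fun _ => ())
  have e₁ : ent q μ (fun ω => (X ω, Y ω, ())) = ent q μ (fun ω => (X ω, Y ω)) :=
    ent_congr fun _ _ => by simp
  have e₂ : ent q μ (fun ω => (Y ω, ())) = ent q μ Y := ent_congr fun _ _ => by simp
  have e₃ : ent q μ (fun ω => (X ω, ())) = ent q μ X := ent_congr fun _ _ => by simp
  simp only [condEnt, e₁, e₂, e₃, ent_const hμ1] at h
  simpa [condEnt] using h

lemma condEnt_le_condEnt_of_determines (hq : 1 < q) (hμ : ∀ ω, 0 ≤ μ ω)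
    (h : Determines μ (fun ω => (Y ω, Z ω)) X) : condEnt q μ X Z ≤ condEnt q μ Y Z := by
  have e : condEnt q μ (fun ω => (X ω, Y ω)) Z = condEnt q μ (fun ω => (Y ω, X ω)) Z := by
    simp only [condEnt]
    rw [ent_congr (X := fun ω => ((X ω, Y ω), Z ω)) (Y := fun ω => ((Y ω, X ω), Z ω))
      fun _ _ => by simp only [Prod.mk.injEq]; tauto]
  rw [condEnt_chain_rule, condEnt_chain_rule, condEnt_eq_zero_of_determines h] at e
  linarith [condEnt_nonneg hq hμ Y (fun ω => (X ω, Z ω))]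

lemma condEnt_pair_left_le (hq : 1 < q) (hμ : ∀ ω, 0 ≤ μ ω) (X : Ω → α) (Y : Ω → β)
    (Z : Ω → γ) :
    condEnt q μ (fun ω => (X ω, Y ω)) Z ≤ condEnt q μ X Z + condEnt q μ Y Z := by
  rw [condEnt_chain_rule]
  linarith [condEnt_pair_right_le hq hμ Y X Z]

end ConditionalEntropy

section Independence

variable {α β γ : Type*} {X : Ω → α} {Y : Ω → β} {Z : Ω → γ}

lemma IndepRV.comp {α' β' : Type*} (h : IndepRV μ X Y) (f : α → α') (g : β → β') :
    IndepRV μ (fun ω => f (X ω)) (fun ω => g (Y ω)) :=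
  fun s t => h (f ⁻¹' s) (g ⁻¹' t)

lemma indepRV_of_pr_singleton
    (h : ∀ a b,
      pr μ (X ⁻¹' {a} ∩ Y ⁻¹' {b}) = pr μ (X ⁻¹' {a}) * pr μ (Y ⁻¹' {b})) :
    IndepRV μ X Y := by
  classical
  intro s t
  set IX := (univ.image X).filter (· ∈ s)
  set IY := (univ.image Y).filter (· ∈ t)
  have hX : ∀ E ⊆ X ⁻¹' s, pr μ E = ∑ a ∈ IX, pr μ (E ∩ X ⁻¹' {a}) := fun E hE =>
    pr_eq_sum_pr_inter E X IX fun ω hω => by simpa [IX] using hE hω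
  have hY : ∀ E ⊆ Y ⁻¹' t, pr μ E = ∑ b ∈ IY, pr μ (E ∩ Y ⁻¹' {b}) := fun E hE =>
    pr_eq_sum_pr_inter E Y IY fun ω hω => by simpa [IY] using hE hω
  have hXs : ∀ a ∈ IX, X ⁻¹' s ∩ X ⁻¹' {a} = X ⁻¹' {a} := fun a ha =>
    Set.inter_eq_right.2 fun ω hω => by simp_all [IX]
  have hYt : ∀ b ∈ IY, Y ⁻¹' t ∩ Y ⁻¹' {b} = Y ⁻¹' {b} := fun b hb =>
    Set.inter_eq_right.2 fun ω hω => by simp_all [IY]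
  rw [hX _ Set.inter_subset_left, hX _ subset_rfl, hY _ subset_rfl, sum_mul_sum]
  refine sum_congr rfl fun a ha => ?_
  rw [hY _ fun ω hω => hω.1.2, hXs a ha]
  refine sum_congr rfl fun b hb => ?_
  rw [hYt b hb, ← h]
  have ha' : a ∈ s := (mem_filter.1 ha).2
  have hb' : b ∈ t := (mem_filter.1 hb).2
  congr 1
  ext ω
  simp only [Set.mem_inter_iff, Set.mem_preimage, Set.mem_singleton_iff]
  constructor
  · exact fun h => ⟨h.1.2, h.2⟩
  · rintro ⟨rfl, rfl⟩
    exact ⟨⟨⟨ha', hb'⟩, rfl⟩, rfl⟩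

lemma IndepRV.symm (h : IndepRV μ X Y) : IndepRV μ Y X := fun s t => by
  rw [Set.inter_comm, h t s, mul_comm]

lemma IndepRV.prodMk_left (h : IndepRV μ X (fun ω => (Y ω, Z ω))) (hYZ : IndepRV μ Y Z) :
    IndepRV μ (fun ω => (X ω, Y ω)) Z := by
  refine indepRV_of_pr_singleton fun ⟨x, y⟩ z => ?_
  have hXY : pr μ ((fun ω => (X ω, Y ω)) ⁻¹' {(x, y)})
      = pr μ (X ⁻¹' {x}) * pr μ (Y ⁻¹' {y}) := by
    have e₁ : (fun ω => (X ω, Y ω)) ⁻¹' {(x, y)}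
        = X ⁻¹' {x} ∩ (fun ω => (Y ω, Z ω)) ⁻¹' ({y} ×ˢ Set.univ) := by
      ext; simp
    have e₂ : (fun ω => (Y ω, Z ω)) ⁻¹' ({y} ×ˢ Set.univ) = Y ⁻¹' {y} := by
      ext; simp
    rw [e₁, h, e₂]
  have hXYZ : pr μ ((fun ω => (X ω, Y ω)) ⁻¹' {(x, y)} ∩ Z ⁻¹' {z})
      = pr μ (X ⁻¹' {x}) * (pr μ (Y ⁻¹' {y}) * pr μ (Z ⁻¹' {z})) := by
    have e₁ : (fun ω => (X ω, Y ω)) ⁻¹' {(x, y)} ∩ Z ⁻¹' {z}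
        = X ⁻¹' {x} ∩ (fun ω => (Y ω, Z ω)) ⁻¹' {(y, z)} := by
      ext; simp only [Set.mem_inter_iff, Set.mem_preimage, Set.mem_singleton_iff, Prod.mk.injEq]
      tauto
    have e₂ : (fun ω => (Y ω, Z ω)) ⁻¹' {(y, z)} = Y ⁻¹' {y} ∩ Z ⁻¹' {z} := by
      ext; simp
    rw [e₁, h, e₂, hYZ]
  rw [hXYZ, hXY]
  ring

lemma ent_pair_of_indepRV (hμ : ∀ ω, 0 ≤ μ ω) (h : IndepRV μ X Y) :
    ent q μ (fun ω => (X ω, Y ω)) = ent q μ X + ent q μ Y := by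
  simp only [ent_eq_neg_sum_atomPr, ← neg_add, ← sum_add_distrib, ← mul_add]
  congr 1
  refine sum_congr rfl fun ω _ => ?_
  by_cases hω : μ ω = 0
  · simp [hω]
  have hfac : atomPr μ (fun ω => (X ω, Y ω)) ω = atomPr μ X ω * atomPr μ Y ω := by
    simpa [atomPr, Set.preimage, Prod.ext_iff, Set.ofPred_and] using h {X ω} {Y ω}
  rw [hfac, Real.logb_mul (atomPr_pos hμ X hω).ne' (atomPr_pos hμ Y hω).ne']

lemma condEnt_of_indepRV (hμ : ∀ ω, 0 ≤ μ ω) (h : IndepRV μ X Y) :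
    condEnt q μ X Y = ent q μ X := by
  rw [condEnt, ent_pair_of_indepRV hμ h]
  ring

end Independence

section Uniform

variable {α β : Type*} {X : Ω → α} {Y : Ω → β} {κ : ℝ}

lemma pr_preimage_eq_card_mul [Fintype β] (h : ∀ a b, pr μ (X ⁻¹' {a} ∩ Y ⁻¹' {b}) = κ)
    (a : α) : pr μ (X ⁻¹' {a}) = Fintype.card β * κ := by
  classical
  rw [pr_eq_sum_pr_inter _ Y univ fun _ _ => mem_univ _]
  simp [h]

lemma card_mul_card_mul_eq_one [Fintype α] [Fintype β] (hμ1 : ∑ ω, μ ω = 1)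
    (h : ∀ a b, pr μ (X ⁻¹' {a} ∩ Y ⁻¹' {b}) = κ) :
    Fintype.card α * (Fintype.card β * κ) = 1 := by
  classical
  rw [← hμ1, ← pr_univ, pr_eq_sum_pr_inter _ X univ fun _ _ => mem_univ _]
  simp [pr_preimage_eq_card_mul h]

lemma pr_preimage_eq_inv_card [Fintype α] [Fintype β] (hμ1 : ∑ ω, μ ω = 1)
    (h : ∀ a b, pr μ (X ⁻¹' {a} ∩ Y ⁻¹' {b}) = κ) (a : α) :
    pr μ (X ⁻¹' {a}) = (Fintype.card α : ℝ)⁻¹ := by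
  rw [pr_preimage_eq_card_mul h]
  exact eq_inv_of_mul_eq_one_right (card_mul_card_mul_eq_one hμ1 h)

lemma indepRV_of_pr_eq_const [Fintype α] [Fintype β] (hμ1 : ∑ ω, μ ω = 1)
    (h : ∀ a b, pr μ (X ⁻¹' {a} ∩ Y ⁻¹' {b}) = κ) : IndepRV μ X Y := by
  have h' : ∀ b a, pr μ (Y ⁻¹' {b} ∩ X ⁻¹' {a}) = κ := fun b a => by
    rw [Set.inter_comm, h]
  refine indepRV_of_pr_singleton fun a b => ?_
  rw [h, pr_preimage_eq_card_mul h, pr_preimage_eq_card_mul h' b]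
  linear_combination (-κ) * card_mul_card_mul_eq_one hμ1 h

lemma ent_eq_logb_card [Fintype α] (hμ1 : ∑ ω, μ ω = 1)
    (h : ∀ a, pr μ (X ⁻¹' {a}) = (Fintype.card α : ℝ)⁻¹) :
    ent q μ X = Real.logb q (Fintype.card α) := by
  have h' : ∀ ω, pr μ {ω' | X ω' = X ω} = (Fintype.card α : ℝ)⁻¹ := fun ω => h (X ω)
  simp only [ent, h', ← sum_mul, hμ1, Real.logb_inv]
  ring

end Uniform

section Secrecy

variable {α β γ δ ε : Type*}

/-- `X → (A, T) → D` is a Markov chain: `D` is independent of `V`, which determines `X`, and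
`A` sees `D` only through `T`. -/
lemma condEnt_pair_right_eq_of_indep (hq : 1 < q) (hμ : ∀ ω, 0 ≤ μ ω)
    (hμ1 : ∑ ω, μ ω = 1) {X : Ω → α} {V : Ω → β} {A : Ω → γ} {D : Ω → δ}
    {T : Ω → ε}
    (hV : condEnt q μ V D = ent q μ V) (hVX : Determines μ V X) (hDT : Determines μ D T)
    (hA : Determines μ (fun ω => (V ω, T ω)) A) :
    condEnt q μ X (fun ω => (A ω, D ω)) = condEnt q μ X (fun ω => (A ω, T ω)) := by
  have hADT : Determines μ (fun ω => (A ω, D ω)) (fun ω => (A ω, T ω)) := by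
    intro ω ω' hω hω' h
    simp only [Prod.mk.injEq] at h ⊢
    exact ⟨h.1, hDT ω ω' hω hω' h.2⟩
  refine (condEnt_anti hq hμ hADT).antisymm ?_
  have e₁ : condEnt q μ X (fun ω => (A ω, D ω))
      = condEnt q μ X (fun ω => (D ω, A ω, T ω)) := by
    refine condEnt_congr_right hq hμ ?_ (.of_forall fun _ _ h => ?_)
    · exact .prodMk (.of_forall fun _ _ h => (Prod.mk.inj h).2) hADT
    · simp only [Prod.mk.injEq] at h ⊢
      exact ⟨h.2.1, h.1⟩
  have e₂ : condEnt q μ D (fun ω => (V ω, A ω, T ω))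
      = condEnt q μ D (fun ω => (V ω, T ω)) := by
    refine condEnt_congr_right hq hμ (.of_forall fun _ _ h => ?_) ?_
    · simp only [Prod.mk.injEq] at h ⊢
      exact ⟨h.1, h.2.2⟩
    · exact .prodMk (.of_forall fun _ _ h => (Prod.mk.inj h).1)
        (.prodMk hA (.of_forall fun _ _ h => (Prod.mk.inj h).2))
  have e₃ : condEnt q μ V (fun ω => (D ω, T ω)) = condEnt q μ V D :=
    condEnt_pair_right_eq_of_determines hDT
  have hXV : condEnt q μ D (fun ω => (V ω, A ω, T ω))
      ≤ condEnt q μ D (fun ω => (X ω, A ω, T ω)) := by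
    refine condEnt_anti hq hμ fun ω ω' hω hω' h => ?_
    simp only [Prod.mk.injEq] at h ⊢
    exact ⟨hVX ω ω' hω hω' h.1, h.2⟩
  have hAT : condEnt q μ D (fun ω => (A ω, T ω)) ≤ condEnt q μ D T :=
    condEnt_pair_right_le hq hμ D A T
  linarith [condEnt_sub_condEnt_comm (q := q) (μ := μ) X D (fun ω => (A ω, T ω)),
    condEnt_sub_condEnt_comm (q := q) (μ := μ) D V T, condEnt_le_ent hq hμ hμ1 V T]

/-- Shannon's perfect-secrecy bound, with `X` the message, `R` the key and `A` the
ciphertext. -/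
lemma condEnt_le_ent_of_perfect_secrecy (hq : 1 < q) (hμ : ∀ ω, 0 ≤ μ ω)
    (hμ1 : ∑ ω, μ ω = 1) {X : Ω → α} {R : Ω → β} {A : Ω → γ} {D : Ω → δ}
    (hA : Determines μ (fun ω => ((X ω, R ω), D ω)) A)
    (hX : condEnt q μ X (fun ω => (A ω, D ω)) = ent q μ X) :
    condEnt q μ A D ≤ ent q μ R := by
  have hcomm := condEnt_sub_condEnt_comm (q := q) (μ := μ) A (fun ω => (X ω, R ω)) D
  rw [condEnt_eq_zero_of_determines hA, condEnt_chain_rule, condEnt_chain_rule] at hcomm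
  linarith [condEnt_le_ent hq hμ hμ1 X D, condEnt_le_ent hq hμ hμ1 R (fun ω => (X ω, D ω)),
    condEnt_nonneg hq hμ R (fun ω => (X ω, A ω, D ω))]

end Secrecy

namespace Scheme

variable {q N K L : ℕ} {F : Type} [Field F] [Fintype F] (S : Scheme q N K L F Ω)

lemma one_lt_q (S : Scheme q N K L F Ω) : 1 < q :=
  S.card_F ▸ Fintype.one_lt_card

lemma indepRV_W_R : IndepRV S.μ (fun ω k => S.W k ω) (fun ω k => S.R k ω) := by
  refine indepRV_of_pr_singleton fun w r => ?_
  have h := S.R_indep (fun k => {r k})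
  have e₁ : (fun ω k => S.W k ω) ⁻¹' {w} ∩ (fun ω k => S.R k ω) ⁻¹' {r}
      = {ω | (fun k => S.W k ω) ∈ ({w} : Set _) ∧ ∀ k, S.R k ω ∈ ({r k} : Set _)} := by
    ext; simp [funext_iff]
  have e₂ : (fun ω k => S.R k ω) ⁻¹' {r}
      = {ω | (fun k => S.W k ω) ∈ (Set.univ : Set _) ∧
          ∀ k, S.R k ω ∈ ({r k} : Set _)} := by
    ext; simp [funext_iff]
  have hW : pr S.μ {ω | (fun k => S.W k ω) ∈ (Set.univ : Set _)} = 1 := by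
    simp only [Set.mem_univ, Set.ofPred_true, pr_univ, S.μ_sum]
  rw [e₁, e₂, h, h, hW, one_mul]
  rfl

lemma pr_forall_R_mem (s : Fin K → Set S.RT) :
    pr S.μ {ω | ∀ k, S.R k ω ∈ s k} = ∏ k, pr S.μ {ω | S.R k ω ∈ s k} := by
  simpa [pr_univ, S.μ_sum] using S.R_indep s Set.univ

lemma indepRV_R_others (m : Fin K) :
    IndepRV S.μ (S.R m) (fun ω (ℓ : {ℓ : Fin K // ℓ ≠ m}) => S.R ℓ ω) := by
  classical
  refine indepRV_of_pr_singleton fun a b => ?_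
  have key : ∀ A : Set S.RT,
      {ω | S.R m ω ∈ A ∧ (fun ℓ : {ℓ : Fin K // ℓ ≠ m} => S.R ℓ ω) = b}
      = {ω | ∀ k, S.R k ω ∈ if h : k = m then A else {b ⟨k, h⟩}} := by
    intro A
    ext ω
    simp only [Set.mem_ofPred_eq, funext_iff]
    refine ⟨fun ⟨hm, hb⟩ k => ?_,
      fun h => ⟨by simpa using h m, fun ℓ => by simpa [ℓ.2] using h ℓ⟩⟩
    by_cases hk : k = m
    · subst hk
      simpa using hm
    · simpa [hk] using hb ⟨k, hk⟩
  have e₁ := key {a}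
  have e₂ := key Set.univ
  simp only [Set.mem_univ, true_and, Set.mem_singleton_iff] at e₁ e₂
  change pr S.μ {ω | S.R m ω = a ∧ (fun ℓ : {ℓ : Fin K // ℓ ≠ m} => S.R ℓ ω) = b}
    = pr S.μ {ω | S.R m ω = a}
      * pr S.μ {ω | (fun ℓ : {ℓ : Fin K // ℓ ≠ m} => S.R ℓ ω) = b}
  rw [e₁, e₂, pr_forall_R_mem, pr_forall_R_mem, Fintype.prod_eq_mul_prod_compl m,
    Fintype.prod_eq_mul_prod_compl m]
  simp only [dite_true, Set.mem_univ, Set.ofPred_true, pr_univ, S.μ_sum, one_mul]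
  congr 1
  refine prod_congr rfl fun k hk => ?_
  have hkm : k ≠ m := by simpa using hk
  simp only [dif_neg hkm]

lemma pr_W_inter_W_others (m : Fin K) (a : Fin L → F)
    (b : {ℓ : Fin K // ℓ ≠ m} → Fin L → F) :
    pr S.μ (S.W m ⁻¹' {a} ∩
      (fun ω (ℓ : {ℓ : Fin K // ℓ ≠ m}) => S.W ℓ ω) ⁻¹' {b})
      = (1 / (q : ℝ) ^ L) ^ K := by
  classical
  rw [← S.W_unif ((Equiv.funSplitAt m _).symm (a, b))]
  congr 1
  ext ω
  simp [Equiv.eq_symm_apply, funext_iff]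

lemma indepRV_W_others (m : Fin K) :
    IndepRV S.μ (S.W m) (fun ω (ℓ : {ℓ : Fin K // ℓ ≠ m}) => S.W ℓ ω) :=
  indepRV_of_pr_eq_const S.μ_sum (S.pr_W_inter_W_others m)

lemma ent_W (m : Fin K) : ent q S.μ (S.W m) = L := by
  classical
  rw [ent_eq_logb_card S.μ_sum (pr_preimage_eq_inv_card S.μ_sum (S.pr_W_inter_W_others m)),
    Fintype.card_fun, Fintype.card_fin, S.card_F, Nat.cast_pow, Real.logb_pow,
    Real.logb_self_eq_one (by exact_mod_cast S.one_lt_q), mul_one]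

/-- `(𝒬, W_m̄, R_m̄)`: everything in the system except the message and randomness of
edge `m`. -/
def offEdge (m : Fin K) :
    Ω → S.UT × ({ℓ : Fin K // ℓ ≠ m} → Fin L → F)
      × ({ℓ : Fin K // ℓ ≠ m} → S.RT) :=
  fun ω => (S.U ω, fun ℓ => S.W ℓ ω, fun ℓ => S.R ℓ ω)

lemma indepRV_R_rest (m : Fin K) : IndepRV S.μ (S.R m)
    (fun ω => (S.U ω, (fun k => S.W k ω),
      fun ℓ : {ℓ : Fin K // ℓ ≠ m} => S.R ℓ ω)) := by
  have hW : IndepRV S.μ (fun ω k => S.W k ω)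
      (fun ω => ((fun ℓ : {ℓ : Fin K // ℓ ≠ m} => S.R ℓ ω), S.R m ω)) :=
    S.indepRV_W_R.comp id fun r => (fun ℓ : {ℓ : Fin K // ℓ ≠ m} => r ℓ, r m)
  have hU : IndepRV S.μ S.U (fun ω => (((fun k => S.W k ω),
      fun ℓ : {ℓ : Fin K // ℓ ≠ m} => S.R ℓ ω), S.R m ω)) :=
    S.U_indep.comp id fun p => ((p.1, fun ℓ : {ℓ : Fin K // ℓ ≠ m} => p.2 ℓ), p.2 m)
  exact (hU.prodMk_left (hW.prodMk_left (S.indepRV_R_others m).symm)).symm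

lemma indepRV_W_offEdge (m : Fin K) : IndepRV S.μ (S.W m) (S.offEdge m) := by
  have hR : IndepRV S.μ (fun ω (ℓ : {ℓ : Fin K // ℓ ≠ m}) => S.R ℓ ω)
      (fun ω => ((fun ℓ : {ℓ : Fin K // ℓ ≠ m} => S.W ℓ ω), S.W m ω)) :=
    S.indepRV_W_R.symm.comp (fun r (ℓ : {ℓ : Fin K // ℓ ≠ m}) => r ℓ)
      fun w => (fun ℓ : {ℓ : Fin K // ℓ ≠ m} => w ℓ, w m)
  have hU : IndepRV S.μ S.U (fun ω => (((fun ℓ : {ℓ : Fin K // ℓ ≠ m} => S.R ℓ ω),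
      fun ℓ : {ℓ : Fin K // ℓ ≠ m} => S.W ℓ ω), S.W m ω)) :=
    S.U_indep.comp id fun p => ((fun ℓ : {ℓ : Fin K // ℓ ≠ m} => p.2 ℓ,
      fun ℓ : {ℓ : Fin K // ℓ ≠ m} => p.1 ℓ), p.1 m)
  exact (hU.prodMk_left (hR.prodMk_left (S.indepRV_W_others m).symm)).symm.comp id
    fun p => (p.1, p.2.2, p.2.1)

lemma indepRV_WR_offEdge (m : Fin K) :
    IndepRV S.μ (fun ω => (S.W m ω, S.R m ω)) (S.offEdge m) := by
  have hR : IndepRV S.μ (S.R m) (fun ω => (S.W m ω, S.offEdge m ω)) :=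
    (S.indepRV_R_rest m).comp id
      fun p => (p.2.1 m, p.1, fun ℓ : {ℓ : Fin K // ℓ ≠ m} => p.2.1 ℓ, p.2.2)
  exact (hR.prodMk_left (S.indepRV_W_offEdge m)).comp Prod.swap id

lemma ent_WR (m : Fin K) :
    ent q S.μ (fun ω => (S.W m ω, S.R m ω)) = L + ent q S.μ (S.R m) := by
  have h : IndepRV S.μ (S.W m) (S.R m) := ((S.indepRV_R_rest m).comp id fun p => p.2.1 m).symm
  rw [ent_pair_of_indepRV S.μ_nonneg h, S.ent_W]

/-- `(Q_n^[k], 𝒲_n ∖ W_m, ℛ_n ∖ R_m)`: what server `n` holds at index `k` besides its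
answer and the data of edge `m`. -/
def sideInfo (n : Fin N) (m k : Fin K) : Ω → S.QT
    × ({ℓ : Fin K // (S.e1 ℓ = n ∨ S.e2 ℓ = n) ∧ ℓ ≠ m} → Fin L → F)
    × ({ℓ : Fin K // (S.e1 ℓ = n ∨ S.e2 ℓ = n) ∧ ℓ ≠ m} → S.RT) :=
  fun ω => (S.Q n k ω, fun ℓ => S.W ℓ ω, fun ℓ => S.R ℓ ω)

lemma determines_Q (n : Fin N) (k : Fin K) : Determines S.μ S.U (S.Q n k) :=
  fun ω ω' hω hω' h =>
    congrFun (determines_of_condEnt_eq_zero S.one_lt_q S.μ_nonneg (S.query_det k)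
      ω ω' hω hω' h) n

lemma determines_sideInfo (n : Fin N) (m k : Fin K) :
    Determines S.μ (S.offEdge m) (S.sideInfo n m k) := by
  intro ω ω' hω hω' h
  simp only [offEdge, sideInfo, Prod.mk.injEq, funext_iff] at h ⊢
  exact ⟨S.determines_Q n k ω ω' hω hω' h.1, fun ℓ => h.2.1 ⟨ℓ, ℓ.2.2⟩,
    fun ℓ => h.2.2 ⟨ℓ, ℓ.2.2⟩⟩

lemma determines_A_of_sideInfo (n : Fin N) (m k : Fin K) :
    Determines S.μ (fun ω => ((S.W m ω, S.R m ω), S.sideInfo n m k ω)) (S.A n k) := by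
  refine Determines.trans (.of_forall fun ω ω' h => ?_)
    (determines_of_condEnt_eq_zero S.one_lt_q S.μ_nonneg (S.answer_det n k))
  simp only [sideInfo, Prod.mk.injEq, funext_iff] at h ⊢
  refine ⟨h.2.1, fun j => ?_, fun j => ?_⟩
  · by_cases hj : j.1 = m
    · exact hj ▸ h.1.1
    · exact h.2.2.1 ⟨j, j.2, hj⟩
  · by_cases hj : j.1 = m
    · exact hj ▸ h.1.2
    · exact h.2.2.2 ⟨j, j.2, hj⟩

lemma determines_A_of_offEdge {m : Fin K} {n : Fin N} (hn : ¬(S.e1 m = n ∨ S.e2 m = n))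
    (k : Fin K) : Determines S.μ (S.offEdge m) (S.A n k) := by
  refine ((S.determines_sideInfo n m k).trans (.of_forall fun ω ω' h => ?_)).trans
    (determines_of_condEnt_eq_zero S.one_lt_q S.μ_nonneg (S.answer_det n k))
  have hj : ∀ j : {j : Fin K // S.e1 j = n ∨ S.e2 j = n}, j.1 ≠ m :=
    fun j hj => hn (hj ▸ j.2)
  simp only [sideInfo, Prod.mk.injEq, funext_iff] at h ⊢
  exact ⟨h.1, fun j => h.2.1 ⟨j, j.2, hj j⟩, fun j => h.2.2 ⟨j, j.2, hj j⟩⟩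

lemma ent_R_le_condEnt_A {m : Fin K} {n : Fin N} (hn : S.e1 m = n ∨ S.e2 m = n) (k : Fin K) :
    ent q S.μ (S.R m) ≤ condEnt q S.μ (S.A n k) S.U := by
  have hq := S.one_lt_q
  set Y := fun ω =>
    (S.U ω, (fun k => S.W k ω), fun ℓ : {ℓ : Fin K // ℓ ≠ m} => S.R ℓ ω)
  have hR : Determines S.μ (fun ω => (S.A n k ω, Y ω)) (S.R m) := by
    refine Determines.trans (fun ω ω' hω hω' h => ?_)
      (determines_of_condEnt_eq_zero hq S.μ_nonneg (S.rand_recov k m n hn))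
    simp only [Y, Prod.mk.injEq, funext_iff] at h ⊢
    exact ⟨h.1, fun j => h.2.2.1 j, fun j => h.2.2.2 ⟨j, j.2.2⟩,
      S.determines_Q n k ω ω' hω hω' h.2.1⟩
  calc ent q S.μ (S.R m) = condEnt q S.μ (S.R m) Y :=
        (condEnt_of_indepRV S.μ_nonneg (S.indepRV_R_rest m)).symm
    _ ≤ condEnt q S.μ (S.A n k) Y := condEnt_le_condEnt_of_determines hq S.μ_nonneg hR
    _ ≤ condEnt q S.μ (S.A n k) S.U :=
        condEnt_anti hq S.μ_nonneg (.of_forall fun _ _ h => (Prod.mk.inj h).1)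

/-- Database privacy for `J = {m}` at index `k`; reliability supplies `W_k`, the one message
of server `n` that the privacy condition does not already reveal. -/
lemma condEnt_W_A_sideInfo_of_ne (n : Fin N) {m k : Fin K} (hk : k ≠ m) :
    condEnt q S.μ (S.W m) (fun ω => (S.A n k ω, S.sideInfo n m k ω)) = ent q S.μ (S.W m) := by
  have hq := S.one_lt_q
  have hpriv := S.db_privacy k {m} hk
  set E := fun ω => ((fun n' => S.A n' k ω), (fun n' => S.Q n' k ω),
    (fun ℓ : {ℓ : Fin K // ℓ ∉ ({m} : Set (Fin K))} => S.R ℓ ω),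
    (fun ℓ : {ℓ : Fin K // ℓ ∉ ({m} : Set (Fin K)) ∧ ℓ ≠ k} => S.W ℓ ω), S.U ω)
  have hiff : ∀ ω' ω, (fun j : ({m} : Set (Fin K)) => S.W j ω')
      = (fun j : ({m} : Set (Fin K)) => S.W j ω) ↔ S.W m ω' = S.W m ω := fun ω' ω =>
    ⟨fun h => congrFun h ⟨m, rfl⟩, fun h => funext fun ⟨_, hj⟩ => by
      simpa [Set.mem_singleton_iff.1 hj] using h⟩
  have e₁ : ent q S.μ (fun ω (j : ({m} : Set (Fin K))) => S.W j ω) = ent q S.μ (S.W m) :=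
    ent_congr hiff
  have e₂ : ent q S.μ (fun ω => ((fun j : ({m} : Set (Fin K)) => S.W j ω), E ω))
      = ent q S.μ (fun ω => (S.W m ω, E ω)) :=
    ent_congr fun ω' ω => by simp only [Prod.mk.injEq, hiff]
  have hWE : condEnt q S.μ (S.W m) E = ent q S.μ (S.W m) := by
    simp only [mutInf, e₁, e₂] at hpriv
    simp only [condEnt]
    linarith
  have hWk : Determines S.μ E (S.W k) :=
    Determines.trans (.of_forall fun ω ω' h => by simp_all [E])
      (determines_of_condEnt_eq_zero hq S.μ_nonneg (S.reliability k))
  have hE : Determines S.μ E (fun ω => (S.A n k ω, S.sideInfo n m k ω)) := by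
    intro ω ω' hω hω' h
    have hk' := hWk ω ω' hω hω' h
    simp only [E, sideInfo, Prod.mk.injEq, funext_iff] at h ⊢
    refine ⟨h.1 n, h.2.1 n, fun ℓ => ?_, fun ℓ => h.2.2.1 ⟨ℓ, ℓ.2.2⟩⟩
    by_cases hℓ : ℓ.1 = k
    · rw [hℓ]
      exact congrFun hk'
    · exact h.2.2.2.1 ⟨ℓ, ℓ.2.2, hℓ⟩
  exact le_antisymm (condEnt_le_ent hq S.μ_nonneg S.μ_sum _ _)
    (hWE ▸ condEnt_anti hq S.μ_nonneg hE)

lemma condEnt_W_A_sideInfo_eq {m : Fin K} {n : Fin N} (hn : S.e1 m = n ∨ S.e2 m = n)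
    (k k' : Fin K) :
    condEnt q S.μ (S.W m) (fun ω => (S.A n k ω, S.sideInfo n m k ω))
      = condEnt q S.μ (S.W m) (fun ω => (S.A n k' ω, S.sideInfo n m k' ω)) := by
  have h := S.user_privacy n k k'
  let f := fun p : S.QT × S.AT × ({j : Fin K // S.e1 j = n ∨ S.e2 j = n} → Fin L → F)
      × ({j : Fin K // S.e1 j = n ∨ S.e2 j = n} → S.RT) =>
    (p.2.1, p.1,
      fun ℓ : {ℓ : Fin K // (S.e1 ℓ = n ∨ S.e2 ℓ = n) ∧ ℓ ≠ m} =>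
        p.2.2.1 ⟨ℓ, ℓ.2.1⟩,
      fun ℓ : {ℓ : Fin K // (S.e1 ℓ = n ∨ S.e2 ℓ = n) ∧ ℓ ≠ m} =>
        p.2.2.2 ⟨ℓ, ℓ.2.1⟩)
  have e₁ : ent q S.μ (fun ω => (S.W m ω, S.A n k ω, S.sideInfo n m k ω))
      = ent q S.μ (fun ω => (S.W m ω, S.A n k' ω, S.sideInfo n m k' ω)) :=
    h.ent_comp fun p => (p.2.2.1 ⟨m, hn⟩, f p)
  have e₂ : ent q S.μ (fun ω => (S.A n k ω, S.sideInfo n m k ω))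
      = ent q S.μ (fun ω => (S.A n k' ω, S.sideInfo n m k' ω)) :=
    h.ent_comp f
  rw [condEnt, condEnt, e₁, e₂]

lemma condEnt_W_A_offEdge {m k₀ : Fin K} {n : Fin N} (hn : S.e1 m = n ∨ S.e2 m = n)
    (hk₀ : k₀ ≠ m) :
    condEnt q S.μ (S.W m) (fun ω => (S.A n m ω, S.offEdge m ω)) = ent q S.μ (S.W m) := by
  rw [condEnt_pair_right_eq_of_indep S.one_lt_q S.μ_nonneg S.μ_sum
    (condEnt_of_indepRV S.μ_nonneg (S.indepRV_WR_offEdge m))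
    (.of_forall fun _ _ h => (Prod.mk.inj h).1) (S.determines_sideInfo n m m)
    (S.determines_A_of_sideInfo n m m), S.condEnt_W_A_sideInfo_eq hn m k₀,
    S.condEnt_W_A_sideInfo_of_ne n hk₀]

lemma condEnt_A_offEdge_le {m k₀ : Fin K} {n : Fin N} (hn : S.e1 m = n ∨ S.e2 m = n)
    (hk₀ : k₀ ≠ m) : condEnt q S.μ (S.A n m) (S.offEdge m) ≤ ent q S.μ (S.R m) := by
  have hA : Determines S.μ (fun ω => ((S.W m ω, S.R m ω), S.offEdge m ω)) (S.A n m) :=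
    (Determines.prodMk (.of_forall fun _ _ h => (Prod.mk.inj h).1)
      ((Determines.of_forall fun _ _ h => (Prod.mk.inj h).2).trans
        (S.determines_sideInfo n m m))).trans (S.determines_A_of_sideInfo n m m)
  exact condEnt_le_ent_of_perfect_secrecy S.one_lt_q S.μ_nonneg S.μ_sum hA
    (S.condEnt_W_A_offEdge hn hk₀)

lemma L_le_ent_R {m k₀ : Fin K} (hk₀ : k₀ ≠ m) : (L : ℝ) ≤ ent q S.μ (S.R m) := by
  have hq := S.one_lt_q
  set C := fun ω => ((S.A (S.e1 m) m ω, S.A (S.e2 m) m ω), S.offEdge m ω)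
  have hA : Determines S.μ C (fun ω n => S.A n m ω) := by
    intro ω ω' hω hω' h
    simp only [C, Prod.mk.injEq] at h
    funext n
    by_cases h₁ : S.e1 m = n
    · exact h₁ ▸ h.1.1
    by_cases h₂ : S.e2 m = n
    · exact h₂ ▸ h.1.2
    exact S.determines_A_of_offEdge (not_or.2 ⟨h₁, h₂⟩) m ω ω' hω hω' h.2
  have hU : Determines S.μ C S.U := .of_forall fun _ _ h => by simp_all [C, offEdge]
  have hW : Determines S.μ C (S.W m) := (hA.prodMk hU).trans
    (determines_of_condEnt_eq_zero hq S.μ_nonneg (S.reliability m))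
  have hR : Determines S.μ C (S.R m) := by
    refine Determines.trans (fun ω ω' hω hω' h => ?_)
      (determines_of_condEnt_eq_zero hq S.μ_nonneg (S.rand_recov m m (S.e1 m) (Or.inl rfl)))
    have hWm := hW ω ω' hω hω' h
    have hQ := S.determines_Q (S.e1 m) m ω ω' hω hω' (hU ω ω' hω hω' h)
    simp only [C, offEdge, Prod.mk.injEq, funext_iff] at h ⊢
    refine ⟨h.1.1, fun j => ?_, fun j => h.2.2.2 ⟨j, j.2.2⟩, hQ⟩
    by_cases hj : j.1 = m
    · rw [hj]
      exact congrFun hWm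
    · exact h.2.2.1 ⟨j, hj⟩
  have hV : condEnt q S.μ (fun ω => (S.W m ω, S.R m ω)) (S.offEdge m)
      = L + ent q S.μ (S.R m) := by
    rw [condEnt_of_indepRV S.μ_nonneg (S.indepRV_WR_offEdge m), S.ent_WR]
  linarith [condEnt_le_condEnt_of_determines hq S.μ_nonneg (hW.prodMk hR),
    condEnt_pair_left_le hq S.μ_nonneg (S.A (S.e1 m) m) (S.A (S.e2 m) m) (S.offEdge m),
    S.condEnt_A_offEdge_le (Or.inl rfl) hk₀, S.condEnt_A_offEdge_le (Or.inr rfl) hk₀]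

end Scheme

theorem pair_answer_bound_general
    {q N K L : ℕ} {F : Type} [Field F] [Fintype F] {Ω : Type} [Fintype Ω]
    (hK : 2 ≤ K)
    (S : Scheme q N K L F Ω) (i j : Fin N)
    (hij : ∃ m : Fin K, (S.e1 m = i ∧ S.e2 m = j) ∨ (S.e1 m = j ∧ S.e2 m = i)) :
    ∀ k : Fin K,
      2 * (L : ℝ) ≤ condEnt q S.μ (S.A i k) S.U + condEnt q S.μ (S.A j k) S.U := by
  intro k
  obtain ⟨m, hm⟩ := hij
  have : Nontrivial (Fin K) := Fin.nontrivial_iff_two_le.2 hK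
  obtain ⟨k₀, hk₀⟩ := exists_ne m
  have hi : S.e1 m = i ∨ S.e2 m = i := by tauto
  have hj : S.e1 m = j ∨ S.e2 m = j := by tauto
  linarith [S.L_le_ent_R hk₀, S.ent_R_le_condEnt_A hi k, S.ent_R_le_condEnt_A hj k]

/-- **Per-edge answer-size bound (eq. (42)).** For every pair of servers `(i, j)`
sharing a message (i.e. `{i, j}` is an edge of the graph) and every desired index `k`
(not necessarily the message stored on that edge),
`H(A_i^[k] | 𝒬) + H(A_j^[k] | 𝒬) ≥ 2·L`. -/
theorem pair_answer_bound
    {q N K L : ℕ} {F : Type} [Field F] [Fintype F] {Ω : Type} [Fintype Ω]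
    (hN : 3 ≤ N) (hK : 2 ≤ K) (hL : 1 ≤ L)
    (S : Scheme q N K L F Ω) (i j : Fin N)
    (hij : ∃ m : Fin K, (S.e1 m = i ∧ S.e2 m = j) ∨ (S.e1 m = j ∧ S.e2 m = i)) :
    ∀ k : Fin K,
      2 * (L : ℝ) ≤ condEnt q S.μ (S.A i k) S.U + condEnt q S.μ (S.A j k) S.U :=
  pair_answer_bound_general hK S i j hij

end SPIR
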